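/- arXiv:1508.05363 — 2 statements merged into one kernel-verified Lean document; each statement's English description precedes it below -/
import Mathlib

section
/- With the Arnoux–Yoccoz interval exchange IE of genus g ≥ 2 and the renormalizing map ψ(s) = fract(α⁻¹ s + (α⁻¹ − 1)/2): for every s ∈ [0, α), if IE(s) < α then ψ(s) lies in the interval J_g = [1 − α^g, 1) and IE(ψ(s)) = ψ(IE(s)). -/
/-- The partial sum `α + α² + ⋯ + α^k`.  The interval `J_k` of the Arnoux–Yoccoz
partition of `[0,1)` is `[aySum α (k-1), aySum α k)`. -/
noncomputable def aySum (α : ℝ) (k : ℕ) : ℝ := ∑ j ∈ Finset.Icc 1 k, α ^ j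

/-- The index `k ≥ 1` such that `t` lies in `J_k = [aySum α (k-1), aySum α k)`
(the least `k` with `t < aySum α k`). -/
noncomputable def ayIdx (α : ℝ) (t : ℝ) : ℕ := sInf {k : ℕ | t < aySum α k}

/-- The first involution `I₁`, rotating each interval `J_k` halfway around:
`I₁ t = t + α^k/2` if this value lies in `J_k`, and `t - α^k/2` otherwise,
where `k` is the index with `t ∈ J_k`. -/
noncomputable def ayI1 (α : ℝ) (t : ℝ) : ℝ :=
  if t + α ^ ayIdx α t / 2 ∈ Set.Ico (aySum α (ayIdx α t - 1)) (aySum α (ayIdx α t)) then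
    t + α ^ ayIdx α t / 2
  else
    t - α ^ ayIdx α t / 2

/-- The second involution `I₂ : t ↦ t + 1/2 (mod 1)`, rotating `[0,1)` halfway around. -/
noncomputable def ayI2 (t : ℝ) : ℝ := Int.fract (t + 1 / 2)

/-- The Arnoux–Yoccoz interval exchange transformation `IE = I₂ ∘ I₁` on `[0,1)`. -/
noncomputable def ayIE (α : ℝ) (t : ℝ) : ℝ := ayI2 (ayI1 α t)


/-- The renormalizing map `ψ(s) = α⁻¹ s + (α⁻¹ − 1)/2 (mod 1)`. -/
noncomputable def ayPsi (α : ℝ) (s : ℝ) : ℝ := Int.fract (α⁻¹ * s + (α⁻¹ - 1) / 2)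

/-! Write `β = α⁻¹`. Multiplying `α + ⋯ + α^g = 1` by `1 - α` gives `α^(g+1) = 2α - 1`, i.e.
`α^g = 2 - β`, so `J_g = [β - 1, 1)` and `β < 2`; moreover `α + α² ≤ 1` forces `3/2 < β`.
With these bounds `IE` is a single translation on each half `[β - 1, β/2)`, `[β/2, 1)` of `J_g`,
and, where `IE s < α`, on each of `[(1 - α)/2, α/2)`, `[α/2, (3α - 1)/2)` inside `J_1 = [0, α)`.
The affine map `s ↦ βs + (β - 1)/2` sends the latter two intervals onto the former two and
conjugates the translations modulo `1`. -/

open Set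

lemma aySum_zero (α : ℝ) : aySum α 0 = 0 := by simp [aySum]

lemma aySum_succ (α : ℝ) (n : ℕ) : aySum α (n + 1) = aySum α n + α ^ (n + 1) :=
  Finset.sum_Icc_succ_top (Nat.le_add_left 1 n) _

lemma aySum_one (α : ℝ) : aySum α 1 = α := by simp [aySum]

lemma aySum_two (α : ℝ) : aySum α 2 = α + α ^ 2 := by
  rw [aySum_succ, aySum_one]

lemma one_sub_mul_aySum (α : ℝ) (n : ℕ) : (1 - α) * aySum α n = α - α ^ (n + 1) := by
  induction n with
  | zero => simp [aySum_zero]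
  | succ n ih => rw [aySum_succ, mul_add, ih]; ring

lemma ayI2_eq_add {t : ℝ} (h₀ : -(1 / 2) ≤ t) (h₁ : t < 1 / 2) : ayI2 t = t + 1 / 2 :=
  Int.fract_eq_self.2 ⟨by linarith, by linarith⟩

lemma ayI2_eq_sub {t : ℝ} (h₀ : 1 / 2 ≤ t) (h₁ : t < 3 / 2) : ayI2 t = t - 1 / 2 :=
  Int.fract_eq_iff.2 ⟨by linarith, by linarith, 1, by push_cast; ring⟩

section Renormalization

variable {g : ℕ} {α : ℝ}

lemma aySum_mono (hα : 0 ≤ α) : Monotone (aySum α) := fun _ _ h =>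
  Finset.sum_le_sum_of_subset_of_nonneg (Finset.Icc_subset_Icc_right h)
    fun i _ _ => pow_nonneg hα i

lemma ayIdx_eq_of_mem (hα : 0 ≤ α) {k : ℕ} {t : ℝ}
    (ht : t ∈ Ico (aySum α (k - 1)) (aySum α k)) : ayIdx α t = k := by
  have hmem : k ∈ {j : ℕ | t < aySum α j} := ht.2
  refine le_antisymm (Nat.sInf_le hmem) (not_lt.1 fun hlt => ?_)
  have hle : aySum α (ayIdx α t) ≤ t :=
    (aySum_mono hα (Nat.le_pred_of_lt hlt)).trans ht.1
  exact hle.not_gt (Nat.sInf_mem ⟨k, hmem⟩)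

lemma ayI1_eq_add (hα : 0 ≤ α) {k : ℕ} {t : ℝ}
    (ht : t ∈ Ico (aySum α (k - 1)) (aySum α k)) (h : t + α ^ k / 2 < aySum α k) :
    ayI1 α t = t + α ^ k / 2 := by
  rw [ayI1, ayIdx_eq_of_mem hα ht, if_pos ⟨le_add_of_le_of_nonneg ht.1 (by positivity), h⟩]

lemma ayI1_eq_sub (hα : 0 ≤ α) {k : ℕ} {t : ℝ}
    (ht : t ∈ Ico (aySum α (k - 1)) (aySum α k)) (h : aySum α k ≤ t + α ^ k / 2) :
    ayI1 α t = t - α ^ k / 2 := by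
  rw [ayI1, ayIdx_eq_of_mem hα ht, if_neg fun hmem => hmem.2.not_ge h]

lemma pow_succ_eq_two_mul_sub_one (hsum : aySum α g = 1) : α ^ (g + 1) = 2 * α - 1 := by
  linarith [hsum ▸ one_sub_mul_aySum α g]

lemma pow_eq_two_sub_inv (hα : α ≠ 0) (hsum : aySum α g = 1) : α ^ g = 2 - α⁻¹ := by
  have h := pow_succ_eq_two_mul_sub_one hsum
  rw [pow_succ] at h
  field_simp
  linarith

lemma one_sub_pow_eq (hα : α ≠ 0) (hsum : aySum α g = 1) : 1 - α ^ g = α⁻¹ - 1 := by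
  rw [pow_eq_two_sub_inv hα hsum]
  ring

lemma aySum_pred (hg : 1 ≤ g) (hsum : aySum α g = 1) : aySum α (g - 1) = 1 - α ^ g := by
  obtain ⟨n, rfl⟩ := Nat.exists_eq_add_of_le' hg
  rw [← hsum, Nat.add_sub_cancel, aySum_succ]
  ring

lemma inv_lt_two (hα : 0 < α) (hsum : aySum α g = 1) : α⁻¹ < 2 := by
  have : 1 / 2 < α := by linarith [pow_succ_eq_two_mul_sub_one hsum, pow_pos hα (g + 1)]
  rw [inv_lt_comm₀ hα two_pos]
  linarith

lemma three_halves_lt_inv (hα : 0 < α) (hg : 2 ≤ g) (hsum : aySum α g = 1) :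
    3 / 2 < α⁻¹ := by
  have h : α + α ^ 2 ≤ 1 := aySum_two α ▸ hsum ▸ aySum_mono hα.le hg
  rw [lt_inv_comm₀ (by norm_num) hα]
  nlinarith

lemma mem_J_g_iff (hα : α ≠ 0) (hg : 1 ≤ g) (hsum : aySum α g = 1) {t : ℝ} :
    t ∈ Ico (aySum α (g - 1)) (aySum α g) ↔ t ∈ Ico (α⁻¹ - 1) 1 := by
  rw [aySum_pred hg hsum, hsum, one_sub_pow_eq hα hsum]

lemma ayIE_of_mem_J_g_lower_half (hα : 0 < α) (hg : 2 ≤ g) (hsum : aySum α g = 1) {t : ℝ}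
    (ht : t ∈ Ico (α⁻¹ - 1) (α⁻¹ / 2)) : ayIE α t = t + 1 / 2 - α⁻¹ / 2 := by
  have hβ₁ := three_halves_lt_inv hα hg hsum
  have hβ₂ := inv_lt_two hα hsum
  have hpow := pow_eq_two_sub_inv hα.ne' hsum
  have htg := (mem_J_g_iff hα.ne' (by omega) hsum).2 ⟨ht.1, by linarith [ht.2]⟩
  rw [ayIE, ayI1_eq_add hα.le htg (by linarith [ht.2]), hpow,
    ayI2_eq_sub (by linarith [ht.1]) (by linarith [ht.2])]
  ring

lemma ayIE_of_mem_J_g_upper_half (hα : 0 < α) (hg : 2 ≤ g) (hsum : aySum α g = 1) {t : ℝ}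
    (ht : t ∈ Ico (α⁻¹ / 2) 1) : ayIE α t = t + α⁻¹ / 2 - 3 / 2 := by
  have hβ₁ := three_halves_lt_inv hα hg hsum
  have hβ₂ := inv_lt_two hα hsum
  have hpow := pow_eq_two_sub_inv hα.ne' hsum
  have htg := (mem_J_g_iff hα.ne' (by omega) hsum).2 ⟨by linarith [ht.1], ht.2⟩
  rw [ayIE, ayI1_eq_sub hα.le htg (by linarith [ht.1]), hpow,
    ayI2_eq_sub (by linarith [ht.1]) (by linarith [ht.2])]
  ring

lemma mem_J_one_iff {t : ℝ} : t ∈ Ico (aySum α (1 - 1)) (aySum α 1) ↔ t ∈ Ico 0 α := by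
  rw [Nat.sub_self, aySum_zero, aySum_one]

lemma ayIE_of_mem_J_one_lower_half (hα : 0 ≤ α) {s : ℝ} (hs : s ∈ Ico 0 (α / 2)) :
    ayIE α s = ayI2 (s + α / 2) := by
  have hs₁ := mem_J_one_iff.2 ⟨hs.1, by linarith [hs.2]⟩
  rw [ayIE, ayI1_eq_add hα hs₁ (by rw [aySum_one, pow_one]; linarith [hs.2]), pow_one]

lemma ayIE_of_mem_J_one_upper_half (hα : α < 1) {s : ℝ} (hs : s ∈ Ico (α / 2) α) :
    ayIE α s = s - α / 2 + 1 / 2 := by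
  have hα₀ : 0 ≤ α := by linarith [hs.1, hs.2]
  have hs₁ := mem_J_one_iff.2 ⟨by linarith [hs.1], hs.2⟩
  rw [ayIE, ayI1_eq_sub hα₀ hs₁ (by rw [aySum_one, pow_one]; linarith [hs.1]), pow_one,
    ayI2_eq_add (by linarith [hs.1]) (by linarith [hs.2])]

lemma ayPsi_eq {s : ℝ} (h : α⁻¹ * s + (α⁻¹ - 1) / 2 ∈ Ico 0 1) :
    ayPsi α s = α⁻¹ * s + (α⁻¹ - 1) / 2 :=
  Int.fract_eq_self.2 h

lemma ayPsi_mem_and_commutes_of_mem_J_one_lower_half (hα : 0 < α) (hg : 2 ≤ g)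
    (hsum : aySum α g = 1) {s : ℝ} (hs : s ∈ Ico 0 (α / 2)) (hIE : ayIE α s < α) :
    ayPsi α s ∈ Ico (α⁻¹ - 1) (α⁻¹ / 2) ∧ ayIE α (ayPsi α s) = ayPsi α (ayIE α s) := by
  have hαβ : α * α⁻¹ = 1 := mul_inv_cancel₀ hα.ne'
  have hβ := three_halves_lt_inv hα hg hsum
  have hα1 : α < 1 := (one_lt_inv₀ hα).1 (by linarith)
  rw [ayIE_of_mem_J_one_lower_half hα.le hs] at hIE ⊢
  have hs' : 1 / 2 ≤ s + α / 2 := by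
    by_contra! h
    rw [ayI2_eq_add (by linarith [hs.1]) h] at hIE
    linarith [hs.1]
  have hu₀ : (α⁻¹ - 1) / 2 ≤ α⁻¹ * s := by nlinarith
  have hu₁ : α⁻¹ * s < 1 / 2 := by nlinarith [hs.2]
  have hψ : ayPsi α s = α⁻¹ * s + (α⁻¹ - 1) / 2 := ayPsi_eq ⟨by linarith, by linarith⟩
  have hψ_mem : ayPsi α s ∈ Ico (α⁻¹ - 1) (α⁻¹ / 2) := hψ ▸ ⟨by linarith, by linarith⟩
  refine ⟨hψ_mem, ?_⟩
  rw [ayIE_of_mem_J_g_lower_half hα hg hsum hψ_mem, hψ, ayI2_eq_sub hs' (by linarith [hs.2]),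
    ayPsi, show α⁻¹ * (s + α / 2 - 1 / 2) + (α⁻¹ - 1) / 2 = α⁻¹ * s by
      linear_combination hαβ / 2, Int.fract_eq_self.2 ⟨by nlinarith [hs.1], by linarith⟩]
  ring

lemma ayPsi_mem_and_commutes_of_mem_J_one_upper_half (hα : 0 < α) (hg : 2 ≤ g)
    (hsum : aySum α g = 1) {s : ℝ} (hs : s ∈ Ico (α / 2) α) (hIE : ayIE α s < α) :
    ayPsi α s ∈ Ico (α⁻¹ / 2) 1 ∧ ayIE α (ayPsi α s) = ayPsi α (ayIE α s) := by
  have hαβ : α * α⁻¹ = 1 := mul_inv_cancel₀ hα.ne'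
  have hβ := three_halves_lt_inv hα hg hsum
  have hα1 : α < 1 := (one_lt_inv₀ hα).1 (by linarith)
  rw [ayIE_of_mem_J_one_upper_half hα1 hs] at hIE ⊢
  have hu₀ : 1 / 2 ≤ α⁻¹ * s := by nlinarith [hs.1]
  have hu₁ : α⁻¹ * s < (3 - α⁻¹) / 2 := by nlinarith
  have hψ : ayPsi α s = α⁻¹ * s + (α⁻¹ - 1) / 2 := ayPsi_eq ⟨by linarith, by linarith⟩
  have hψ_mem : ayPsi α s ∈ Ico (α⁻¹ / 2) 1 := hψ ▸ ⟨by linarith, by linarith⟩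
  refine ⟨hψ_mem, ?_⟩
  rw [ayIE_of_mem_J_g_upper_half hα hg hsum hψ_mem, hψ, ayPsi,
    show α⁻¹ * (s - α / 2 + 1 / 2) + (α⁻¹ - 1) / 2 = α⁻¹ * s + α⁻¹ - 1 by
      linear_combination -hαβ / 2,
    (Int.fract_eq_iff (b := α⁻¹ * s + α⁻¹ - 2)).2
      ⟨by linarith, by linarith [inv_lt_two hα hsum], 1, by push_cast; ring⟩]
  ring

end Renormalization

theorem ayPsi_mem_J_g_and_commutes_general (g : ℕ) (hg : 2 ≤ g) (α : ℝ) (hα0 : 0 < α)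
    (hsum : ∑ k ∈ Finset.Icc 1 g, α ^ k = 1)
    (s : ℝ) (hs : s ∈ Set.Ico (0 : ℝ) α) (hIE : ayIE α s < α) :
    ayPsi α s ∈ Set.Ico (1 - α ^ g) 1 ∧ ayIE α (ayPsi α s) = ayPsi α (ayIE α s) := by
  rw [one_sub_pow_eq hα0.ne' hsum]
  rcases lt_or_ge s (α / 2) with hlt | hge
  · obtain ⟨hψ, hcomm⟩ :=
      ayPsi_mem_and_commutes_of_mem_J_one_lower_half hα0 hg hsum ⟨hs.1, hlt⟩ hIE
    exact ⟨⟨hψ.1, hψ.2.trans (by linarith [inv_lt_two hα0 hsum])⟩, hcomm⟩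
  · obtain ⟨hψ, hcomm⟩ :=
      ayPsi_mem_and_commutes_of_mem_J_one_upper_half hα0 hg hsum ⟨hge, hs.2⟩ hIE
    exact ⟨⟨by linarith [hψ.1, inv_lt_two hα0 hsum], hψ.2⟩, hcomm⟩

/-- For `s ∈ [0, α)`, if `IE(s) < α` then `ψ(s)` lies in `J_g = [1 − α^g, 1)`
and `IE(ψ(s)) = ψ(IE(s))`. -/
theorem ayPsi_mem_J_g_and_commutes (g : ℕ) (hg : 2 ≤ g) (α : ℝ) (hα0 : 0 < α) (hα1 : α < 1)
    (hsum : ∑ k ∈ Finset.Icc 1 g, α ^ k = 1)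
    (s : ℝ) (hs : s ∈ Set.Ico (0 : ℝ) α) (hIE : ayIE α s < α) :
    ayPsi α s ∈ Set.Ico (1 - α ^ g) 1 ∧ ayIE α (ayPsi α s) = ayPsi α (ayIE α s) :=
  ayPsi_mem_J_g_and_commutes_general g hg α hα0 hsum s hs hIE
end

section
/- Let E be a perfect field with algebraic closure Ē, let K be an intermediate field of Ē/E, and let F be a finite-dimensional intermediate field of Ē/E. Suppose there is a prime p not dividing [F : E] such that the Galois group Aut(Ē/K) = (Ē ≃ₐ[K] Ē), with its Krull topology, is pro-p (every quotient by an open normal subgroup is a p-group). Then every intermediate field L of F/E which is totally-K (every E-algebra homomorphism L → Ē has image contained in K) satisfies [L : E] ≤ card(Hom_E(F, K)), the number of E-algebra homomorphisms from F to K. In particular the maximal totally-K subextension of F/E has degree at most card(Hom_E(F,K)) over E. -/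
/-!
Fix `τ : L →ₐ[E] Ē`. Its extensions to `F` form a set of `[F : L]` elements, a divisor of
`[F : E]` and hence prime to `p`. As `τ` takes values in `K`, `Aut(Ē/K)` permutes these
extensions, through its quotient by an open normal subgroup, which is a `p`-group; so some
extension is fixed by all of `Aut(Ē/K)`, and since `Ē/K` is Galois it takes values in `K`.
This gives an injection `Hom_E(L, Ē) ↪ Hom_E(F, K)`, and `Hom_E(L, Ē)` has `[L : E]` elements.
-/

open IntermediateField

def IsProPGroup (p : ℕ) (G : Type*) [Group G] [TopologicalSpace G] : Prop :=
  ∀ (N : Subgroup G) [N.Normal], IsOpen (N : Set G) → IsPGroup p (G ⧸ N)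

theorem IsProPGroup.exists_forall_smul_eq {p : ℕ} [Fact p.Prime] {G X : Type*} [Group G]
    [TopologicalSpace G] [MulAction G X] [Finite X] (hG : IsProPGroup p G)
    (hstab : ∀ x : X, IsOpen (MulAction.stabilizer G x : Set G)) (hX : ¬ p ∣ Nat.card X) :
    ∃ x : X, ∀ g : G, g • x = x := by
  let φ := MulAction.toPermHom G X
  have hker : IsOpen (φ.ker : Set G) := by
    have : (φ.ker : Set G) = ⋂ x : X, MulAction.stabilizer G x := by
      ext g; simp [φ, Equiv.Perm.ext_iff]
    rw [this]
    exact isOpen_iInter_of_finite hstab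
  let : MulAction (G ⧸ φ.ker) X := MulAction.compHom X (QuotientGroup.kerLift φ)
  obtain ⟨x, hx⟩ := (hG φ.ker hker).nonempty_fixed_point_of_prime_not_dvd_card X hX
  exact ⟨x, fun g => hx (g : G ⧸ φ.ker)⟩

section Postcomp

variable {R S A C : Type*} [CommSemiring R] [CommSemiring S] [Semiring A] [Semiring C]
  [Algebra R S] [Algebra R A] [Algebra S C] [Algebra R C] [IsScalarTower R S C]

instance AlgHom.postcompMulAction : MulAction (C ≃ₐ[S] C) (A →ₐ[R] C) where
  smul g σ := ((g : C →ₐ[S] C).restrictScalars R).comp σ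
  one_smul _ := rfl
  mul_smul _ _ _ := rfl

@[simp]
theorem AlgHom.algEquiv_smul_apply (g : C ≃ₐ[S] C) (σ : A →ₐ[R] C) (x : A) :
    (g • σ) x = g (σ x) := rfl

end Postcomp

theorem AlgHom.isOpen_stabilizer_algEquiv {E S A C : Type*} [Field E] [Field S] [Field C] [Ring A]
    [Algebra E S] [Algebra E A] [Algebra S C] [Algebra E C] [IsScalarTower E S C]
    [Algebra.IsIntegral S C] [Module.Finite E A] (σ : A →ₐ[E] C) :
    IsOpen (MulAction.stabilizer (C ≃ₐ[S] C) σ : Set (C ≃ₐ[S] C)) := by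
  let b := Module.finBasis E A
  refine Subgroup.isOpen_mono (H₁ := ⨅ i, MulAction.stabilizer _ (σ (b i))) (fun g hg => ?_) ?_
  · rw [Subgroup.mem_iInf] at hg
    exact AlgHom.toLinearMap_injective (b.ext fun i => hg i)
  · rw [Subgroup.coe_iInf]
    exact isOpen_iInter_of_finite fun i => stabilizer_isOpen_of_isIntegral _

theorem card_extensions_mul_finrank {E L F C : Type*} [Field E] [Field L] [Field F] [Field C]
    [Algebra E L] [Algebra E F] [Algebra E C] [FiniteDimensional E F] [Algebra.IsSeparable E F]
    [IsAlgClosed C] (j : L →ₐ[E] F) (τ : L →ₐ[E] C) :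
    Nat.card {σ : F →ₐ[E] C // σ.comp j = τ} * Module.finrank E L = Module.finrank E F := by
  let : Algebra L F := j.toAlgebra
  let : Algebra L C := τ.toAlgebra
  have : IsScalarTower E L F := .of_algebraMap_eq fun x => (j.commutes x).symm
  have : IsScalarTower E L C := .of_algebraMap_eq fun x => (τ.commutes x).symm
  have : FiniteDimensional L F := .right E L F
  have : Algebra.IsSeparable L F := Algebra.isSeparable_tower_top_of_isSeparable E L F
  let extensions : {σ : F →ₐ[E] C // σ.comp j = τ} ≃ (F →ₐ[L] C) :=
    { toFun := fun σ => { σ.1 with commutes' := fun y => AlgHom.congr_fun σ.2 y }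
      invFun := fun ψ => ⟨ψ.restrictScalars E, AlgHom.ext ψ.commutes⟩
      left_inv := fun _ => rfl
      right_inv := fun _ => rfl }
  rw [Nat.card_congr extensions, AlgHom.natCard_of_splits L F C fun _ => IsAlgClosed.splits _,
    mul_comm, Module.finrank_mul_finrank]

section Extension

variable {E Ebar L F : Type*} [Field E] [Field Ebar] [Algebra E Ebar] [Field L] [Field F]
  [Algebra E L] [Algebra E F] (K : IntermediateField E Ebar)

def extensionsSubMulAction (j : L →ₐ[E] F) (τ : L →ₐ[E] Ebar) (hτ : ∀ x, τ x ∈ K) :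
    SubMulAction (Ebar ≃ₐ[K] Ebar) (F →ₐ[E] Ebar) where
  carrier := {σ | σ.comp j = τ}
  smul_mem' g σ hσ := by
    ext x
    have hσx : σ (j x) = τ x := AlgHom.congr_fun hσ x
    rw [AlgHom.comp_apply, AlgHom.algEquiv_smul_apply, hσx]
    exact g.commutes ⟨τ x, hτ x⟩

theorem exists_extension_forall_mem_of_isProPGroup [IsAlgClosed Ebar] [IsGalois K Ebar]
    [FiniteDimensional E F] [Algebra.IsSeparable E F] {p : ℕ} [Fact p.Prime]
    (hK : IsProPGroup p (Ebar ≃ₐ[K] Ebar)) (hF : ¬ p ∣ Module.finrank E F)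
    (j : L →ₐ[E] F) (τ : L →ₐ[E] Ebar) (hτ : ∀ x, τ x ∈ K) :
    ∃ σ : F →ₐ[E] Ebar, σ.comp j = τ ∧ ∀ x, σ x ∈ K := by
  let X := extensionsSubMulAction K j τ hτ
  have hcard : Nat.card X * Module.finrank E L = Module.finrank E F :=
    card_extensions_mul_finrank j τ
  obtain ⟨σ, hσ⟩ := hK.exists_forall_smul_eq
    (fun σ : X => Subgroup.isOpen_mono (fun g hg => Subtype.ext hg)
      (AlgHom.isOpen_stabilizer_algEquiv σ.1))
    (fun h => hF (hcard ▸ h.mul_right _))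
  refine ⟨σ, σ.2, fun x => ?_⟩
  simpa using (InfiniteGalois.mem_range_algebraMap_iff_fixed (σ.1 x)).mpr
    fun g => congr_arg (fun σ : X => σ.1 x) (hσ g)

end Extension

/-- Bound on totally-`K` subextensions of a finite extension `F/E` of a perfect field:
if `p` is a prime not dividing `[F : E]` and the Galois group `Aut(Ē/K)` (with its
Krull topology) is pro-`p`, then every intermediate field `L ≤ F` which is totally-`K`
(every `E`-algebra homomorphism `L → Ē` has image contained in `K`) satisfies
`[L : E] ≤ card (Hom_E(F, K))`. -/
theorem totallyK_subextension_card_bound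
    {E Ebar : Type*} [Field E] [Field Ebar] [Algebra E Ebar]
    [IsAlgClosure E Ebar] [PerfectField E]
    (K F : IntermediateField E Ebar) [FiniteDimensional E F]
    (p : ℕ) (hp : p.Prime) (hpdeg : ¬ p ∣ Module.finrank E F)
    (hpro : ∀ (N : Subgroup (Ebar ≃ₐ[↥K] Ebar)) [N.Normal],
      IsOpen (N : Set (Ebar ≃ₐ[↥K] Ebar)) → IsPGroup p ((Ebar ≃ₐ[↥K] Ebar) ⧸ N))
    (L : IntermediateField E Ebar) (hLF : L ≤ F)
    (hL : ∀ σ : ↥L →ₐ[E] Ebar, ∀ x : ↥L, σ x ∈ K) :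
    Module.finrank E ↥L ≤ Nat.card (↥F →ₐ[E] ↥K) := by
  have := IsAlgClosure.isAlgClosed E (K := Ebar)
  have : Fact p.Prime := ⟨hp⟩
  have : FiniteDimensional E L :=
    .of_injective (inclusion hLF).toLinearMap (inclusion_injective hLF)
  have hext (τ : L →ₐ[E] Ebar) : ∃ σ : F →ₐ[E] K, (K.val.comp σ).comp (inclusion hLF) = τ :=
    have ⟨σ, hσ, hσK⟩ :=
      exists_extension_forall_mem_of_isProPGroup K hpro hpdeg (inclusion hLF) τ (hL τ)
    ⟨σ.codRestrict K.toSubalgebra hσK, hσ⟩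
  choose Φ hΦ using hext
  calc Module.finrank E L = Nat.card (L →ₐ[E] Ebar) :=
        (AlgHom.natCard_of_splits E L Ebar fun _ => IsAlgClosed.splits _).symm
    _ ≤ Nat.card (F →ₐ[E] K) :=
        Nat.card_le_card_of_injective Φ fun τ₁ τ₂ h => by rw [← hΦ τ₁, ← hΦ τ₂, h]
end
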